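/- arXiv:2210.16645 — 3 statements merged into one kernel-verified Lean document; each statement's English description precedes it below -/
import Mathlib

section
/- Modified Kuhn–Munkres theorem: Let G be a complete weighted bipartite graph on vertex sets V₁ of size m and V₂ of size n with nonnegative edge weights w, and let m_1,…,m_n be positive integers with ∑_j m_j = m. Suppose l : V₁ ∪ V₂ → ℝ is a feasible labeling, i.e. l(v₁) + l(v₂) ≥ w(v₁,v₂) for all v₁ ∈ V₁, v₂ ∈ V₂. If PM is a perfect pseudo-matching contained in the equality subgraph E_l = {(v₁,v₂) : l(v₁)+l(v₂) = w(v₁,v₂)}, then PM has maximum total weight among all perfect pseudo-matchings of G. -/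
/-!
Weak LP duality: by feasibility, every perfect pseudo-matching `g` has weight at most
`∑ i, l1 i + ∑ i, l2 (g i)`, and the second sum depends only on the fiber sizes `m_j` of `g`,
so it is the same bound `∑ i, l1 i + ∑ j, m_j * l2 j` for all of them. A pseudo-matching made
of equality edges attains this bound.
-/

open Finset

theorem Fintype.sum_comp_eq_sum_card_fiber_nsmul {α β M : Type*} [Fintype α] [Fintype β]
    [DecidableEq β] [AddCommMonoid M] (f : α → β) (φ : β → M) :
    ∑ a, φ (f a) = ∑ b, #{a | f a = b} • φ b := by
  simp_rw [← sum_const, sum_fiberwise_of_maps_to' fun a _ => mem_univ (f a)]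

theorem Fintype.sum_comp_eq_of_card_fiber_eq {α β M : Type*} [Fintype α] [Fintype β]
    [DecidableEq β] [AddCommMonoid M] {f g : α → β} (h : ∀ b, #{a | f a = b} = #{a | g a = b})
    (φ : β → M) : ∑ a, φ (f a) = ∑ a, φ (g a) := by
  simp only [Fintype.sum_comp_eq_sum_card_fiber_nsmul _ φ, h]

theorem stmt_4_general (m n : ℕ) (mv : Fin n → ℕ)
    (w : Fin m → Fin n → ℝ)
    (l1 : Fin m → ℝ) (l2 : Fin n → ℝ)
    (hfeas : ∀ i j, w i j ≤ l1 i + l2 j)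
    (f : Fin m → Fin n)
    (hfib : ∀ j, (univ.filter (fun i => f i = j)).card = mv j)
    (heq : ∀ i, l1 i + l2 (f i) = w i (f i)) :
    ∀ g : Fin m → Fin n,
      (∀ j, (univ.filter (fun i => g i = j)).card = mv j) →
      ∑ i, w i (g i) ≤ ∑ i, w i (f i) := by
  intro g hg
  have same_fibers : ∀ j, #{i | g i = j} = #{i | f i = j} := fun j => (hg j).trans (hfib j).symm
  calc ∑ i, w i (g i) ≤ ∑ i, (l1 i + l2 (g i)) := sum_le_sum fun i _ => hfeas i (g i)
    _ = ∑ i, l1 i + ∑ i, l2 (g i) := sum_add_distrib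
    _ = ∑ i, l1 i + ∑ i, l2 (f i) := by
        rw [Fintype.sum_comp_eq_of_card_fiber_eq same_fibers]
    _ = ∑ i, (l1 i + l2 (f i)) := sum_add_distrib.symm
    _ = ∑ i, w i (f i) := sum_congr rfl fun i _ => heq i

/-- Modified Kuhn–Munkres theorem: if `l` is a feasible labeling
and the perfect pseudo-matching `f` (fiber sizes `m_j`) uses only equality
edges, then `f` has maximum weight among all perfect pseudo-matchings. -/
theorem stmt_4 (m n : ℕ) (mv : Fin n → ℕ) (hpos : ∀ j, 0 < mv j)
    (hsum : ∑ j, mv j = m)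
    (w : Fin m → Fin n → ℝ) (hw : ∀ i j, 0 ≤ w i j)
    (l1 : Fin m → ℝ) (l2 : Fin n → ℝ)
    (hfeas : ∀ i j, w i j ≤ l1 i + l2 j)
    (f : Fin m → Fin n)
    (hfib : ∀ j, (univ.filter (fun i => f i = j)).card = mv j)
    (heq : ∀ i, l1 i + l2 (f i) = w i (f i)) :
    ∀ g : Fin m → Fin n,
      (∀ j, (univ.filter (fun i => g i = j)).card = mv j) →
      ∑ i, w i (g i) ≤ ∑ i, w i (f i) :=
  stmt_4_general m n mv w l1 l2 hfeas f hfib heq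
end

section
/- In the labeling update step of the modified Hungarian algorithm, let l be a feasible labeling, S ⊆ V₂ and T ⊆ V₁ with S nonempty and T ≠ V₁, and suppose every equality edge incident to S has its V₁-endpoint in T. Define α_l = min{ l(v₁)+l(v₂) − w(v₁,v₂) : v₁ ∉ T, v₂ ∈ S } and the updated labeling l'(v) = l(v) − α_l for v ∈ S, l'(v) = l(v) + α_l for v ∈ T, l'(v) = l(v) otherwise. Then α_l > 0, l' is a feasible labeling, all equality edges between T and S remain equality edges, and there exists a new equality edge (v₁, v₂) with v₁ ∉ T and v₂ ∈ S under l'. -/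
open Finset

section LabelingUpdate

variable {V1 V2 R : Type*} [AddCommGroup R] [LinearOrder R] [IsOrderedAddMonoid R]
  {w : V1 → V2 → R} {l1 : V1 → R} {l2 : V2 → R} {S : Finset V2} {T : Finset V1} {α : R}

/-- The minimum is attained, and zero slack there would be an equality edge from `S` to outside `T`. -/
theorem pos_of_isLeast_slack (hfeas : ∀ v1 v2, w v1 v2 ≤ l1 v1 + l2 v2)
    (hN : ∀ v1 v2, v2 ∈ S → l1 v1 + l2 v2 = w v1 v2 → v1 ∈ T)
    (hα : IsLeast {x : R | ∃ v1 v2, v1 ∉ T ∧ v2 ∈ S ∧ x = l1 v1 + l2 v2 - w v1 v2} α) :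
    0 < α := by
  obtain ⟨⟨a1, a2, ha1, ha2, rfl⟩, -⟩ := hα
  exact sub_pos.mpr ((hfeas a1 a2).lt_of_ne fun h => ha1 (hN a1 a2 ha2 h.symm))

theorem updated_labeling_feasible [DecidableEq V1] [DecidableEq V2]
    (hfeas : ∀ v1 v2, w v1 v2 ≤ l1 v1 + l2 v2) (hα : 0 ≤ α)
    (hle : ∀ v1 ∉ T, ∀ v2 ∈ S, α ≤ l1 v1 + l2 v2 - w v1 v2) (v1 : V1) (v2 : V2) :
    w v1 v2 ≤ (if v1 ∈ T then l1 v1 + α else l1 v1) +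
      (if v2 ∈ S then l2 v2 - α else l2 v2) := by
  have := hfeas v1 v2
  by_cases h1 : v1 ∈ T <;> by_cases h2 : v2 ∈ S <;> simp only [h1, h2, if_true, if_false]
  · calc w v1 v2 ≤ l1 v1 + l2 v2 := this
      _ = l1 v1 + α + (l2 v2 - α) := by abel
  · calc w v1 v2 ≤ l1 v1 + l2 v2 := this
      _ ≤ l1 v1 + α + l2 v2 := by gcongr; exact le_add_of_nonneg_right hα
  · have := hle v1 h1 v2 h2
    calc w v1 v2 = l1 v1 + l2 v2 - (l1 v1 + l2 v2 - w v1 v2) := by abel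
      _ ≤ l1 v1 + l2 v2 - α := by gcongr
      _ = l1 v1 + (l2 v2 - α) := by abel
  · exact this

end LabelingUpdate

theorem stmt_8_general {V1 V2 : Type*}
    [DecidableEq V1] [DecidableEq V2]
    (w : V1 → V2 → ℝ) (l1 : V1 → ℝ) (l2 : V2 → ℝ)
    (hfeas : ∀ v1 v2, w v1 v2 ≤ l1 v1 + l2 v2)
    (S : Finset V2) (T : Finset V1)
    (hN : ∀ v1 v2, v2 ∈ S → l1 v1 + l2 v2 = w v1 v2 → v1 ∈ T)
    (α : ℝ)
    (hα : IsLeast {x : ℝ | ∃ v1 v2, v1 ∉ T ∧ v2 ∈ S ∧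
      x = l1 v1 + l2 v2 - w v1 v2} α) :
    0 < α ∧
    (∀ v1 v2, w v1 v2 ≤ (if v1 ∈ T then l1 v1 + α else l1 v1) +
      (if v2 ∈ S then l2 v2 - α else l2 v2)) ∧
    (∀ v1 ∈ T, ∀ v2 ∈ S, l1 v1 + l2 v2 = w v1 v2 →
      (l1 v1 + α) + (l2 v2 - α) = w v1 v2) ∧
    (∃ v1, v1 ∉ T ∧ ∃ v2 ∈ S, l1 v1 + (l2 v2 - α) = w v1 v2) := by
  have hpos := pos_of_isLeast_slack hfeas hN hα
  obtain ⟨⟨a1, a2, ha1, ha2, hαeq⟩, hlb⟩ := hα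
  refine ⟨hpos, updated_labeling_feasible hfeas hpos.le
    (fun v1 h1 v2 h2 => hlb ⟨v1, v2, h1, h2, rfl⟩), ?_, ?_⟩
  · intro v1 _ v2 _ h
    linarith
  · exact ⟨a1, ha1, a2, ha2, by linarith⟩

/-- correctness of the labeling update step of the modified
Hungarian algorithm: `α_l > 0`, the updated labeling is feasible, equality
edges between `T` and `S` are preserved, and a new equality edge with
`v₁ ∉ T`, `v₂ ∈ S` appears. -/
theorem stmt_8 {V1 V2 : Type*} [Fintype V1] [Fintype V2]
    [DecidableEq V1] [DecidableEq V2]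
    (w : V1 → V2 → ℝ) (l1 : V1 → ℝ) (l2 : V2 → ℝ)
    (hfeas : ∀ v1 v2, w v1 v2 ≤ l1 v1 + l2 v2)
    (S : Finset V2) (hS : S.Nonempty) (T : Finset V1) (hT : T ≠ univ)
    (hN : ∀ v1 v2, v2 ∈ S → l1 v1 + l2 v2 = w v1 v2 → v1 ∈ T)
    (α : ℝ)
    (hα : IsLeast {x : ℝ | ∃ v1 v2, v1 ∉ T ∧ v2 ∈ S ∧
      x = l1 v1 + l2 v2 - w v1 v2} α) :
    0 < α ∧
    (∀ v1 v2, w v1 v2 ≤ (if v1 ∈ T then l1 v1 + α else l1 v1) +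
      (if v2 ∈ S then l2 v2 - α else l2 v2)) ∧
    (∀ v1 ∈ T, ∀ v2 ∈ S, l1 v1 + l2 v2 = w v1 v2 →
      (l1 v1 + α) + (l2 v2 - α) = w v1 v2) ∧
    (∃ v1, v1 ∉ T ∧ ∃ v2 ∈ S, l1 v1 + (l2 v2 - α) = w v1 v2) :=
  stmt_8_general w l1 l2 hfeas S T hN α hα
end

section
/- Let n_1,…,n_m and m_1,…,m_n be positive integers with ∑_i n_i = ∑_j m_j = M, and C ∈ ℝ^{m×n}. The minimum of ∑_{i,j} X*_{ij} C_{ij} over nonnegative m×n matrices X* with row sums n_i/M and column sums m_j/M equals the minimum of ∑_{t,j} X†_{tj} C†_{tj} over nonnegative M×n matrices X† with all row sums equal to 1/M and column sums m_j/M, where C† is obtained from C by duplicating row i exactly n_i times. -/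
/-!
Summing the rows of a plan for `C†` over each block gives a plan for `C` with the same cost;
conversely, splitting row `i` of a plan for `C` evenly over its `n_i` copies gives a plan for `C†`
with the same cost. Hence both problems attain exactly the same set of costs, and this set has a
least element because the transport plans form a nonempty compact polytope.
-/

open Finset

namespace Transport

theorem card_filter_eq_sub_of_iff {ι : Type*} [DecidableEq ι] {M : ℕ} (b : Fin M → ι) (i : ι)
    {lo hi : ℕ} (h : ∀ t, b t = i ↔ lo ≤ t ∧ t < hi) (hhi : hi ≤ M) :
    #{t | b t = i} = hi - lo := by
  rw [← Nat.card_Ico, ← card_map Fin.valEmbedding]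
  congr 1
  ext x
  simp only [mem_map, mem_filter, mem_univ, true_and, Fin.valEmbedding_apply, mem_Ico]
  constructor
  · rintro ⟨t, ht, rfl⟩
    exact (h t).1 ht
  · intro hx
    exact ⟨⟨x, hx.2.trans_le hhi⟩, (h _).2 hx, rfl⟩

variable {ι κ τ : Type*} [Fintype ι] [Fintype κ] [Fintype τ]

def transportPlans (r : ι → ℝ) (c : κ → ℝ) : Set (ι → κ → ℝ) :=
  {X | (∀ i j, 0 ≤ X i j) ∧ (∀ i, ∑ j, X i j = r i) ∧ ∀ j, ∑ i, X i j = c j}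

def transportCost (C X : ι → κ → ℝ) : ℝ := ∑ i, ∑ j, X i j * C i j

theorem setOf_exists_transportCost_eq_image (r : ι → ℝ) (c : κ → ℝ) (C : ι → κ → ℝ) :
    {s : ℝ | ∃ X : ι → κ → ℝ, (∀ i j, 0 ≤ X i j) ∧ (∀ i, ∑ j, X i j = r i) ∧
      (∀ j, ∑ i, X i j = c j) ∧ s = ∑ i, ∑ j, X i j * C i j} =
      transportCost C '' transportPlans r c := by
  ext s
  simp only [Set.mem_ofPred_eq, Set.mem_image, transportPlans, transportCost, and_assoc,
    eq_comm (a := s)]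

theorem continuous_transportCost (C : ι → κ → ℝ) : Continuous (transportCost C) := by
  unfold transportCost
  fun_prop

theorem transportPlans_nonempty {r : ι → ℝ} {c : κ → ℝ} (hr : 0 ≤ r) (hc : 0 ≤ c)
    (hsum : ∑ i, r i = ∑ j, c j) : (transportPlans r c).Nonempty := by
  set s := ∑ j, c j
  -- the product coupling `r ⊗ c / s`; when `s = 0` both marginals vanish
  refine ⟨fun i j => r i * c j / s,
    fun i j => div_nonneg (mul_nonneg (hr i) (hc j)) (sum_nonneg fun j _ => hc j),
    fun i => ?_, fun j => ?_⟩
  · rw [← sum_div, ← mul_sum]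
    rcases eq_or_ne s 0 with hs | hs
    · rw [hs, div_zero, eq_comm]
      exact (sum_eq_zero_iff_of_nonneg fun i _ => hr i).1 (hsum.trans hs) i (mem_univ i)
    · exact mul_div_cancel_right₀ _ hs
  · rw [← sum_div, ← sum_mul, hsum]
    rcases eq_or_ne s 0 with hs | hs
    · rw [hs, div_zero, eq_comm]
      exact (sum_eq_zero_iff_of_nonneg fun j _ => hc j).1 hs j (mem_univ j)
    · exact mul_div_cancel_left₀ _ hs

theorem isClosed_transportPlans (r : ι → ℝ) (c : κ → ℝ) : IsClosed (transportPlans r c) := by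
  simp only [transportPlans, Set.ofPred_and, Set.ofPred_forall]
  exact (isClosed_iInter fun i => isClosed_iInter fun j =>
    isClosed_le continuous_const (by fun_prop)).inter
    ((isClosed_iInter fun i => isClosed_eq (by fun_prop) continuous_const).inter
      (isClosed_iInter fun j => isClosed_eq (by fun_prop) continuous_const))

theorem transportPlans_subset_Icc (r : ι → ℝ) (c : κ → ℝ) :
    transportPlans r c ⊆ Set.Icc 0 (fun i _ => r i) := by
  rintro X ⟨hX, hrow, -⟩
  exact ⟨fun i j => hX i j,
    fun i j => (single_le_sum (fun j _ => hX i j) (mem_univ j)).trans_eq (hrow i)⟩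

theorem isCompact_transportPlans (r : ι → ℝ) (c : κ → ℝ) : IsCompact (transportPlans r c) :=
  isCompact_Icc.of_isClosed_subset (isClosed_transportPlans r c) (transportPlans_subset_Icc r c)

theorem exists_isLeast_transportCost {r : ι → ℝ} {c : κ → ℝ}
    (h : (transportPlans r c).Nonempty) (C : ι → κ → ℝ) :
    ∃ v, IsLeast (transportCost C '' transportPlans r c) v :=
  ((isCompact_transportPlans r c).image (continuous_transportCost C)).exists_isLeast
    (h.image _)

section Duplication

variable [DecidableEq ι] (b : τ → ι)

def aggregate (Y : τ → κ → ℝ) (i : ι) (j : κ) : ℝ := ∑ t with b t = i, Y t j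

noncomputable def spread (X : ι → κ → ℝ) (t : τ) (j : κ) : ℝ := X (b t) j / #{t' | b t' = b t}

variable {b} {a : ι → ℝ} {c : κ → ℝ}

theorem aggregate_mem_transportPlans {Y : τ → κ → ℝ}
    (hY : Y ∈ transportPlans (fun t => a (b t)) c) :
    aggregate b Y ∈ transportPlans (fun i => #{t | b t = i} * a i) c := by
  obtain ⟨hY0, hrow, hcol⟩ := hY
  refine ⟨fun i j => sum_nonneg fun t _ => hY0 t j, fun i => ?_, fun j => ?_⟩
  · calc ∑ j, aggregate b Y i j = ∑ t with b t = i, ∑ j, Y t j := sum_comm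
      _ = ∑ t with b t = i, a i :=
        sum_congr rfl fun t ht => (hrow t).trans (congrArg a (mem_filter.1 ht).2)
      _ = #{t | b t = i} * a i := by rw [sum_const, nsmul_eq_mul]
  · simp only [aggregate]
    rw [sum_fiberwise, hcol]

theorem transportCost_aggregate (C : ι → κ → ℝ) (Y : τ → κ → ℝ) :
    transportCost C (aggregate b Y) = transportCost (fun t => C (b t)) Y := by
  simp only [transportCost, aggregate, sum_mul]
  rw [← sum_fiberwise univ b fun t => ∑ j, Y t j * C (b t) j]
  refine sum_congr rfl fun i _ => ?_
  rw [sum_comm]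
  refine sum_congr rfl fun t ht => sum_congr rfl fun j _ => ?_
  rw [(mem_filter.1 ht).2]

-- An empty fibre forces a zero row, so multiplying and dividing by its size is harmless.
theorem card_fiber_mul_div_card_fiber {X : ι → κ → ℝ}
    (hX : X ∈ transportPlans (fun i => #{t | b t = i} * a i) c) (i : ι) (j : κ) :
    (#{t | b t = i} : ℝ) * (X i j / #{t | b t = i}) = X i j := by
  obtain ⟨hX0, hrow, -⟩ := hX
  rcases eq_or_ne (#{t | b t = i} : ℝ) 0 with h | h
  · rw [h, zero_mul, eq_comm]
    refine (sum_eq_zero_iff_of_nonneg fun j _ => hX0 i j).1 ?_ j (mem_univ j)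
    simpa [h] using hrow i
  · exact mul_div_cancel₀ _ h

theorem sum_spread_eq_sum {X : ι → κ → ℝ}
    (hX : X ∈ transportPlans (fun i => #{t | b t = i} * a i) c) (g : ι → κ → ℝ) (j : κ) :
    ∑ t, spread b X t j * g (b t) j = ∑ i, X i j * g i j := by
  rw [← sum_fiberwise univ b]
  refine sum_congr rfl fun i _ => ?_
  rw [sum_congr rfl fun t ht => by rw [spread, (mem_filter.1 ht).2], sum_const, nsmul_eq_mul,
    ← mul_assoc, card_fiber_mul_div_card_fiber hX]

theorem spread_mem_transportPlans {X : ι → κ → ℝ}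
    (hX : X ∈ transportPlans (fun i => #{t | b t = i} * a i) c) :
    spread b X ∈ transportPlans (fun t => a (b t)) c := by
  have ⟨hX0, hrow, hcol⟩ := hX
  refine ⟨fun t j => div_nonneg (hX0 _ j) (Nat.cast_nonneg _), fun t => ?_, fun j => ?_⟩
  · have hne : (#{t' | b t' = b t} : ℝ) ≠ 0 :=
      Nat.cast_ne_zero.2 (card_ne_zero_of_mem (mem_filter.2 ⟨mem_univ t, rfl⟩))
    simp only [spread]
    rw [← sum_div, hrow, mul_div_cancel_left₀ _ hne]
  · simpa [hcol] using sum_spread_eq_sum hX (fun _ _ => 1) j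

theorem transportCost_spread {X : ι → κ → ℝ}
    (hX : X ∈ transportPlans (fun i => #{t | b t = i} * a i) c) (C : ι → κ → ℝ) :
    transportCost (fun t => C (b t)) (spread b X) = transportCost C X := by
  calc transportCost (fun t => C (b t)) (spread b X)
      = ∑ j, ∑ t, spread b X t j * C (b t) j := sum_comm
    _ = ∑ j, ∑ i, X i j * C i j := sum_congr rfl fun j _ => sum_spread_eq_sum hX C j
    _ = transportCost C X := sum_comm

theorem image_transportCost_comp (b : τ → ι) (a : ι → ℝ) (c : κ → ℝ) (C : ι → κ → ℝ) :
    transportCost (fun t => C (b t)) '' transportPlans (fun t => a (b t)) c =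
      transportCost C '' transportPlans (fun i => #{t | b t = i} * a i) c := by
  ext s
  constructor
  · rintro ⟨Y, hY, rfl⟩
    exact ⟨aggregate b Y, aggregate_mem_transportPlans hY, transportCost_aggregate C Y⟩
  · rintro ⟨X, hX, rfl⟩
    exact ⟨spread b X, spread_mem_transportPlans hX, transportCost_spread hX C⟩

end Duplication

end Transport

open Transport in
theorem stmt_9_general (M m n : ℕ) (nv : Fin m → ℕ) (mv : Fin n → ℕ)
    (hnsum : ∑ i, nv i = M) (hmsum : ∑ j, mv j = M)
    (blkR : Fin M → Fin m)
    (hblkR : ∀ (t : Fin M) (i : Fin m), blkR t = i ↔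
      (∑ i' ∈ univ.filter (fun i' => i' < i), nv i') ≤ (t : ℕ) ∧
      (t : ℕ) < ∑ i' ∈ univ.filter (fun i' => i' ≤ i), nv i')
    (C : Fin m → Fin n → ℝ)
    (Cdag : Fin M → Fin n → ℝ) (hCdag : ∀ t j, Cdag t j = C (blkR t) j) :
    ∃ v : ℝ,
      IsLeast {s : ℝ | ∃ X : Fin m → Fin n → ℝ,
        (∀ i j, 0 ≤ X i j) ∧ (∀ i, ∑ j, X i j = (nv i : ℝ) / M) ∧
        (∀ j, ∑ i, X i j = (mv j : ℝ) / M) ∧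
        s = ∑ i, ∑ j, X i j * C i j} v ∧
      IsLeast {s : ℝ | ∃ Y : Fin M → Fin n → ℝ,
        (∀ t j, 0 ≤ Y t j) ∧ (∀ t, ∑ j, Y t j = 1 / M) ∧
        (∀ j, ∑ t, Y t j = (mv j : ℝ) / M) ∧
        s = ∑ t, ∑ j, Y t j * Cdag t j} v := by
  have hcard (i : Fin m) : #{t | blkR t = i} = nv i := by
    have hIic :
        ∑ i' ∈ univ.filter (· ≤ i), nv i' = ∑ i' ∈ univ.filter (· < i), nv i' + nv i := by
      rw [filter_ge_eq_Iic, filter_gt_eq_Iio, Iic_eq_cons_Iio, sum_cons, add_comm]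
    rw [card_filter_eq_sub_of_iff blkR i (hblkR · i) (hnsum ▸ sum_le_sum_of_subset
      (filter_subset _ _)), hIic, Nat.add_sub_cancel_left]
  have hrow : (fun i => (nv i : ℝ) / M) = fun i => (#{t | blkR t = i} : ℝ) * (1 / M) := by
    simp only [hcard, mul_one_div]
  have hsum : ∑ i, (nv i : ℝ) / M = ∑ j, (mv j : ℝ) / M := by
    rw [← sum_div, ← sum_div]
    exact_mod_cast congrArg (fun k : ℕ => (k : ℝ) / M) (hnsum.trans hmsum.symm)
  obtain ⟨v, hv⟩ := exists_isLeast_transportCost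
    (transportPlans_nonempty (fun i => by positivity) (fun j => by positivity) hsum) C
  refine ⟨v, ?_, ?_⟩
  · rwa [setOf_exists_transportCost_eq_image]
  · rw [setOf_exists_transportCost_eq_image, show Cdag = fun t => C (blkR t) from funext₂ hCdag,
      image_transportCost_comp blkR (fun _ => 1 / M), ← hrow]
    exact hv

/-- Proposition 3: the OT minimum with row marginals `n_i/M` and
column marginals `m_j/M` equals the OT minimum with uniform row marginals
`1/M` against the row-duplicated cost matrix `C†`. -/
theorem stmt_9 (M m n : ℕ) (nv : Fin m → ℕ) (mv : Fin n → ℕ)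
    (hnpos : ∀ i, 0 < nv i) (hmpos : ∀ j, 0 < mv j)
    (hnsum : ∑ i, nv i = M) (hmsum : ∑ j, mv j = M)
    (blkR : Fin M → Fin m)
    (hblkR : ∀ (t : Fin M) (i : Fin m), blkR t = i ↔
      (∑ i' ∈ univ.filter (fun i' => i' < i), nv i') ≤ (t : ℕ) ∧
      (t : ℕ) < ∑ i' ∈ univ.filter (fun i' => i' ≤ i), nv i')
    (C : Fin m → Fin n → ℝ)
    (Cdag : Fin M → Fin n → ℝ) (hCdag : ∀ t j, Cdag t j = C (blkR t) j) :
    ∃ v : ℝ,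
      IsLeast {s : ℝ | ∃ X : Fin m → Fin n → ℝ,
        (∀ i j, 0 ≤ X i j) ∧ (∀ i, ∑ j, X i j = (nv i : ℝ) / M) ∧
        (∀ j, ∑ i, X i j = (mv j : ℝ) / M) ∧
        s = ∑ i, ∑ j, X i j * C i j} v ∧
      IsLeast {s : ℝ | ∃ Y : Fin M → Fin n → ℝ,
        (∀ t j, 0 ≤ Y t j) ∧ (∀ t, ∑ j, Y t j = 1 / M) ∧
        (∀ j, ∑ t, Y t j = (mv j : ℝ) / M) ∧
        s = ∑ t, ∑ j, Y t j * Cdag t j} v :=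
  stmt_9_general M m n nv mv hnsum hmsum blkR hblkR C Cdag hCdag
end
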